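/- arXiv:math/0412517 — 2 statements merged into one kernel-verified Lean document; each statement's English description precedes it below -/
import Mathlib

section
/- The map Ψ : ℝᵐ × S^{m−1} → T*S^{m−1} × ℝ defined by Ψ(q, p) = (p, q − ⟨q,p⟩p, ⟨q,p⟩) (where the middle component is viewed as a covector on S^{m−1} at p via the Euclidean metric) is a diffeomorphism. -/
/- STATEMENT 8: The map Ψ : ℝᵐ × S^{m−1} → T*S^{m−1} × ℝ,
Ψ(q,p) = (p, q − ⟨q,p⟩p, ⟨q,p⟩), is a diffeomorphism.  Here T*S^{m−1} is modeled
as {(p,w) : |p| = 1, ⟨w,p⟩ = 0} ⊂ ℝᵐ × ℝᵐ (metric identification of covectors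
with tangent vectors).  "Diffeomorphism" is expressed by: Ψ is smooth, is a
bijection from ℝᵐ × S^{m−1} onto J¹(S^{m−1}) = T*S^{m−1} × ℝ, and has a smooth
inverse (smoothness of maps of submanifolds of Euclidean space being smoothness
of an ambient extension). -/

open scoped RealInnerProductSpace

noncomputable section

abbrev E (m : ℕ) := EuclideanSpace ℝ (Fin m)

/-- Ψ(q,p) = (p, q − ⟨q,p⟩p, ⟨q,p⟩). -/
def Psi (m : ℕ) (x : E m × E m) : E m × E m × ℝ :=
  (x.2, x.1 - ⟪x.1, x.2⟫ • x.2, ⟪x.1, x.2⟫)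

/-- The unit cotangent bundle of ℝᵐ: ℝᵐ × S^{m−1}. -/
def W (m : ℕ) : Set (E m × E m) := {x | ‖x.2‖ = 1}

/-- The 1-jet space J¹(S^{m−1}) = T*S^{m−1} × ℝ. -/
def Jet (m : ℕ) : Set (E m × E m × ℝ) := {y | ‖y.1‖ = 1 ∧ ⟪y.2.1, y.1⟫ = 0}

theorem Psi_diffeomorphism (m : ℕ) :
    ContDiff ℝ (⊤ : ℕ∞) (Psi m) ∧ Set.BijOn (Psi m) (W m) (Jet m) ∧
    ∃ Φ : E m × E m × ℝ → E m × E m, ContDiff ℝ (⊤ : ℕ∞) Φ ∧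
      (∀ x ∈ W m, Φ (Psi m x) = x) ∧
      (∀ y ∈ Jet m, Psi m (Φ y) = y ∧ Φ y ∈ W m) := by
  set Φ : E m × E m × ℝ → E m × E m := fun y => (y.2.1 + y.2.2 • y.1, y.1) with hΦ
  have hinner : ContDiff ℝ (⊤ : ℕ∞) (fun x : E m × E m => (⟪x.1, x.2⟫ : ℝ)) :=
    contDiff_fst.inner ℝ contDiff_snd
  have hPsi : ContDiff ℝ (⊤ : ℕ∞) (Psi m) := by
    refine contDiff_snd.prodMk (ContDiff.prodMk ?_ hinner)
    exact contDiff_fst.sub (hinner.smul contDiff_snd)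
  have hΦs : ContDiff ℝ (⊤ : ℕ∞) Φ := by
    refine ContDiff.prodMk ?_ contDiff_fst
    exact (contDiff_snd.fst).add ((contDiff_snd.snd).smul contDiff_fst)
  have hleft : ∀ x ∈ W m, Φ (Psi m x) = x := by
    intro x hx
    simp [hΦ, Psi, sub_add_cancel]
  have hright : ∀ y ∈ Jet m, Psi m (Φ y) = y ∧ Φ y ∈ W m := by
    intro y hy
    obtain ⟨h1, h2⟩ := hy
    have hpp : (⟪y.1, y.1⟫ : ℝ) = 1 := by
      rw [real_inner_self_eq_norm_sq, h1]; norm_num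
    have key : (⟪y.2.1 + y.2.2 • y.1, y.1⟫ : ℝ) = y.2.2 := by
      rw [inner_add_left, real_inner_smul_left, h2, hpp]; ring
    constructor
    · simp only [Psi, hΦ, key]
      ext <;> simp
    · exact h1
  refine ⟨hPsi, ⟨?_, ?_, ?_⟩, Φ, hΦs, hleft, hright⟩
  · intro x hx
    have hx1 : ‖x.2‖ = 1 := hx
    have hpp : (⟪x.2, x.2⟫ : ℝ) = 1 := by
      rw [real_inner_self_eq_norm_sq, hx1]; norm_num
    refine ⟨hx1, ?_⟩
    simp only [Psi]
    rw [inner_sub_left, real_inner_smul_left, hpp]; ring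
  · intro x hx x' hx' h
    have := hleft x hx
    rw [← this, h, hleft x' hx']
  · intro y hy
    exact ⟨Φ y, (hright y hy).2, (hright y hy).1⟩

end
end

section
/- Let B = σ_k be the braid group generator on n strands and φ_{σ_k} the algebra endomorphism of the free unital ℤ/2-algebra on generators {a_{ij} : 1 ≤ i ≠ j ≤ n} defined by: a_{ki} ↦ a_{k+1,i} + a_{k+1,k}a_{ki} and a_{ik} ↦ a_{i,k+1} + a_{ik}a_{k,k+1} for i ≠ k, k+1; a_{k+1,i} ↦ a_{ki} and a_{i,k+1} ↦ a_{ik} for i ≠ k, k+1; a_{k,k+1} ↦ a_{k+1,k}; a_{k+1,k} ↦ a_{k,k+1}; and a_{ij} ↦ a_{ij} for i, j ∉ {k, k+1}. Then φ_{σ_k} is an algebra automorphism (i.e., it is invertible). -/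
/-! The inverse of `φ_{σ_k}` is the map given by the same formulas with the roles of `k` and
`k+1` exchanged. Composing the two on `a_{ki}` gives
`a_{ki} + a_{k,k+1} a_{k+1,i} + a_{k,k+1} a_{k+1,i} = a_{ki}`, the quadratic corrections cancelling
in characteristic 2, symmetrically on `a_{ik}`, and on every other generator the two maps are
mutually inverse relabellings. -/

/-- Index set of the generators a_{ij}, i ≠ j. -/
def G (n : ℕ) : Type := {x : Fin n × Fin n // x.1 ≠ x.2}

/-- The free unital associative ℤ/2-algebra on the a_{ij}. -/
abbrev A (n : ℕ) := FreeAlgebra (ZMod 2) (G n)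

/-- The generator a_{ij} (defined to be 0 in the irrelevant case i = j). -/
noncomputable def gen (n : ℕ) (i j : Fin n) : A n :=
  if h : i ≠ j then FreeAlgebra.ι (ZMod 2) (⟨(i, j), h⟩ : G n) else 0

/-- The value of φ_{σ_k} on the generator a_{ij}; here `k'` denotes k+1. -/
noncomputable def phiGen (n : ℕ) (k k' : Fin n) (x : G n) : A n :=
  let i := x.1.1
  let j := x.1.2
  if i = k ∧ j = k' then gen n k' k
  else if i = k' ∧ j = k then gen n k k'
  else if i = k then gen n k' j + gen n k' k * gen n k j
  else if j = k then gen n i k' + gen n i k * gen n k k'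
  else if i = k' then gen n k j
  else if j = k' then gen n i k
  else gen n i j

noncomputable def phi (n : ℕ) (k k' : Fin n) : A n →ₐ[ZMod 2] A n :=
  FreeAlgebra.lift (ZMod 2) (phiGen n k k')

theorem ι_eq_gen {n : ℕ} (x : G n) : FreeAlgebra.ι (ZMod 2) x = gen n x.1.1 x.1.2 := by
  rw [gen, dif_pos x.2]
  rfl

section
variable {n : ℕ} {k k' i j : Fin n}

theorem phi_gen (hij : i ≠ j) :
    phi n k k' (gen n i j) =
      if i = k ∧ j = k' then gen n k' k
      else if i = k' ∧ j = k then gen n k k'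
      else if i = k then gen n k' j + gen n k' k * gen n k j
      else if j = k then gen n i k' + gen n i k * gen n k k'
      else if i = k' then gen n k j
      else if j = k' then gen n i k
      else gen n i j := by
  conv_lhs => rw [gen, dif_pos hij]
  exact FreeAlgebra.lift_ι_apply (R := ZMod 2) (phiGen n k k') _

theorem phi_gen_k_k' (hkk : k ≠ k') : phi n k k' (gen n k k') = gen n k' k := by
  simp [phi_gen hkk]

theorem phi_gen_k'_k (hkk : k ≠ k') : phi n k k' (gen n k' k) = gen n k k' := by
  simp [phi_gen hkk.symm, hkk.symm]

theorem phi_gen_k_i (hik : i ≠ k) (hik' : i ≠ k') :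
    phi n k k' (gen n k i) = gen n k' i + gen n k' k * gen n k i := by
  simp [phi_gen hik.symm, hik, hik']

theorem phi_gen_i_k (hik : i ≠ k) (hik' : i ≠ k') :
    phi n k k' (gen n i k) = gen n i k' + gen n i k * gen n k k' := by
  simp [phi_gen hik, hik, hik']

theorem phi_gen_k'_i (hkk : k ≠ k') (hik : i ≠ k) (hik' : i ≠ k') :
    phi n k k' (gen n k' i) = gen n k i := by
  simp [phi_gen hik'.symm, hik, hik', hkk.symm]

theorem phi_gen_i_k' (hkk : k ≠ k') (hik : i ≠ k) (hik' : i ≠ k') :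
    phi n k k' (gen n i k') = gen n i k := by
  simp [phi_gen hik', hik, hik', hkk.symm]

theorem phi_gen_of_ne (hij : i ≠ j) (hik : i ≠ k) (hik' : i ≠ k') (hjk : j ≠ k)
    (hjk' : j ≠ k') : phi n k k' (gen n i j) = gen n i j := by
  simp [phi_gen hij, hik, hik', hjk, hjk']

theorem phi_swap_phi_gen (hkk : k ≠ k') (hij : i ≠ j) :
    phi n k' k (phi n k k' (gen n i j)) = gen n i j := by
  rcases eq_or_ne i k with rfl | hik
  · rcases eq_or_ne j k' with rfl | hjk'
    · rw [phi_gen_k_k' hkk, phi_gen_k_k' hkk.symm]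
    · rw [phi_gen_k_i hij.symm hjk', map_add, map_mul, phi_gen_k'_i hkk.symm hjk' hij.symm,
        phi_gen_k_i hjk' hij.symm, phi_gen_k_k' hkk.symm, add_assoc, ZModModule.add_self,
        add_zero]
  rcases eq_or_ne i k' with rfl | hik'
  · rcases eq_or_ne j k with rfl | hjk
    · rw [phi_gen_k'_k hkk, phi_gen_k'_k hkk.symm]
    · rw [phi_gen_k'_i hkk hjk hij.symm, phi_gen_k'_i hkk.symm hij.symm hjk]
  rcases eq_or_ne j k with rfl | hjk
  · rw [phi_gen_i_k hik hik', map_add, map_mul, phi_gen_i_k hik' hik,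
      phi_gen_i_k' hkk.symm hik' hik, phi_gen_k'_k hkk.symm, add_assoc, ZModModule.add_self,
      add_zero]
  rcases eq_or_ne j k' with rfl | hjk'
  · rw [phi_gen_i_k' hkk hik hik', phi_gen_i_k' hkk.symm hik' hik]
  rw [phi_gen_of_ne hij hik hik' hjk hjk', phi_gen_of_ne hij hik' hik hjk' hjk]

theorem phi_swap_comp_phi (hkk : k ≠ k') : (phi n k' k).comp (phi n k k') = AlgHom.id _ _ :=
  FreeAlgebra.hom_ext <| funext fun x => by
    simpa [ι_eq_gen] using phi_swap_phi_gen hkk x.2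

end

/-- φ_{σ_k}, the algebra endomorphism of 𝒜ₙ induced by the above values on
generators, is an automorphism. -/
theorem phi_sigma_automorphism (n : ℕ) (k k' : Fin n)
    (hk : (k : ℕ) + 1 = (k' : ℕ)) :
    Function.Bijective (FreeAlgebra.lift (ZMod 2) (phiGen n k k')) := by
  have hkk : k ≠ k' := fun h => by simp [h] at hk
  exact (AlgEquiv.ofAlgHom _ _ (phi_swap_comp_phi hkk.symm) (phi_swap_comp_phi hkk)).bijective
end
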